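/- arXiv:2005.01357 — 3 statements merged into one kernel-verified Lean document; each statement's English description precedes it below -/
import Mathlib

section
/- Assume (H1)–(H6). For every ω ∈ Ω and every μ ≥ Ã(ω) there exists a globally Lipschitz function m_μ(·,0,ω) : ℝ → ℝ which is a viscosity solution of the metric problem H(Dm_μ(y,0,ω),y,ω) = μ in ℝ ∖ {0} with m_μ(0,0,ω) = 0. -/
open MeasureTheory ProbabilityTheory Set Filter Topology

noncomputable section

variable {Ω : Type*}

/-! ### Viscosity solutions of stationary Hamilton-Jacobi equations -/

/-- Viscosity subsolution of `G(Du, y) ≤ μ` on the set `U`. -/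
def IsViscSubsol (G : ℝ → ℝ → ℝ) (μ : ℝ) (U : Set ℝ) (u : ℝ → ℝ) : Prop :=
  ∀ φ : ℝ → ℝ, ContDiff ℝ 1 φ → ∀ y₀ ∈ U,
    IsLocalMaxOn (fun y => u y - φ y) U y₀ → G (deriv φ y₀) y₀ ≤ μ

/-- Viscosity supersolution of `G(Du, y) ≥ μ` on the set `U`. -/
def IsViscSupersol (G : ℝ → ℝ → ℝ) (μ : ℝ) (U : Set ℝ) (u : ℝ → ℝ) : Prop :=
  ∀ φ : ℝ → ℝ, ContDiff ℝ 1 φ → ∀ y₀ ∈ U,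
    IsLocalMinOn (fun y => u y - φ y) U y₀ → μ ≤ G (deriv φ y₀) y₀

/-- Viscosity solution of `G(Du, y) = μ` on the set `U`. -/
def IsViscSol (G : ℝ → ℝ → ℝ) (μ : ℝ) (U : Set ℝ) (u : ℝ → ℝ) : Prop :=
  IsViscSubsol G μ U u ∧ IsViscSupersol G μ U u

/-- Globally Lipschitz real function. -/
def IsLip (v : ℝ → ℝ) : Prop := ∃ K : NNReal, LipschitzWith K v

/-- Assumptions (H1)–(H6) on a random Hamiltonian `H = H(p, y, ω)`. -/
structure HamHyp [MeasurableSpace Ω] (H : ℝ → ℝ → Ω → ℝ) : Prop where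
  meas : Measurable fun q : ℝ × ℝ × Ω => H q.1 q.2.1 q.2.2
  lip_p : ∃ K : NNReal, ∀ (y : ℝ) (ω : Ω), LipschitzWith K fun p => H p y ω
  bounds : ∃ c₀ C₀ γ : ℝ, 0 < c₀ ∧ 0 < C₀ ∧ 0 < γ ∧
    ∀ (p y : ℝ) (ω : Ω), -c₀ * |p + γ| ≤ H p y ω ∧ H p y ω ≤ C₀ * |p + γ|
  coercive : ∀ M : ℝ, ∃ R : ℝ, ∀ (p y : ℝ) (ω : Ω), R ≤ |p| → M ≤ H p y ω
  modulus : ∃ w : ℝ → ℝ, Monotone w ∧ w 0 = 0 ∧ ContinuousAt w 0 ∧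
    ∀ (p x y : ℝ) (ω : Ω), |H p y ω - H p x ω| ≤ w (|x - y| * (1 + |p|))
  convex_p : ∀ (y : ℝ) (ω : Ω), ConvexOn ℝ Set.univ fun p => H p y ω
  min_at_zero : ∀ (p y : ℝ) (ω : Ω), H 0 y ω ≤ H p y ω

/-- The stochastic flux limiter `Ã(ω)`: the smallest `μ` such that the equation
`H(Dv, y, ω) ≤ μ` admits a globally Lipschitz viscosity subsolution on `ℝ`. -/
def fluxLimiter (H : ℝ → ℝ → Ω → ℝ) (ω : Ω) : ℝ :=
  sInf {μ : ℝ | ∃ v : ℝ → ℝ, IsLip v ∧ IsViscSubsol (fun p y => H p y ω) μ Set.univ v}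

/-- The maximal subsolution `m_μ(y, x, ω)` of the metric problem. -/
def metricSol (H : ℝ → ℝ → Ω → ℝ) (μ : ℝ) (ω : Ω) (y x : ℝ) : ℝ :=
  sSup {r : ℝ | ∃ v : ℝ → ℝ, IsLip v ∧
    IsViscSubsol (fun p y => H p y ω) μ Set.univ v ∧ r = v y - v x}

/-! ### Stochastic framework -/

/-- Stationarity (H8) of a Hamiltonian with respect to a translation group `τ`. -/
def Stationary (τ : ℝ → Ω → Ω) (H : ℝ → ℝ → Ω → ℝ) : Prop :=
  ∀ (p y z : ℝ) (ω : Ω), H p (y + z) ω = H p y (τ z ω)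

/-- An ergodic group of measure-preserving transformations of `(Ω, F, P)`. -/
structure ErgodicSetup [MeasurableSpace Ω] (P : Measure Ω) (τ : ℝ → Ω → Ω) : Prop where
  meas : ∀ z, Measurable (τ z)
  preserving : ∀ z, MeasurePreserving (τ z) P P
  add : ∀ x z : ℝ, τ (x + z) = τ x ∘ τ z
  ergodic : ∀ A : Set Ω, MeasurableSet A → (∀ z, τ z ⁻¹' A = A) → P A = 0 ∨ P A = 1

/-- σ-algebra generated by the maps `ω ↦ H(p, y, ω)`, `y ∈ U`, `p ∈ ℝ`. -/
def genSigma [MeasurableSpace Ω] (H : ℝ → ℝ → Ω → ℝ) (U : Set ℝ) : MeasurableSpace Ω :=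
  ⨆ y ∈ U, ⨆ p : ℝ, MeasurableSpace.comap (fun ω => H p y ω) inferInstance

/-- Unit range of dependence (H9). -/
def UnitRangeDep [MeasurableSpace Ω] (P : Measure Ω) (H : ℝ → ℝ → Ω → ℝ) : Prop :=
  ∀ U V : Set ℝ, MeasurableSet U → MeasurableSet V →
    (∀ x ∈ U, ∀ y ∈ V, 1 ≤ |x - y|) →
    ProbabilityTheory.Indep (genSigma H U) (genSigma H V) P

/-! ### The decompositions (H7-WFL) and (H7-ε) for a family `H ε` of Hamiltonians -/

/-- (H7-WFL). -/
def DecompWFL (HL HR : ℝ → ℝ → Ω → ℝ) (H : ℝ → ℝ → ℝ → Ω → ℝ) : Prop :=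
  ∃ φ : ℝ → ℝ, ContDiff ℝ (⊤ : ℕ∞) φ ∧ Antitone φ ∧
    (∀ y : ℝ, y ≤ -1 → φ y = 1) ∧ (∀ y : ℝ, 1 ≤ y → φ y = 0) ∧
    ∀ (ε p y : ℝ) (ω : Ω), H ε p y ω = φ y * HL p y ω + (1 - φ y) * HR p y ω

/-- (H7-ε). -/
def DecompEps (HL HR H0 : ℝ → ℝ → Ω → ℝ) (H : ℝ → ℝ → ℝ → Ω → ℝ) : Prop :=
  (∀ (p y : ℝ) (ω : Ω), HL p y ω ≤ H0 p y ω ∧ HR p y ω ≤ H0 p y ω) ∧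
  ∃ ψ : ℝ → ℝ → ℝ,
    (∀ ε : ℝ, 0 < ε → ContDiff ℝ (⊤ : ℕ∞) (ψ ε) ∧
      (∀ y : ℝ, 2 / Real.sqrt ε < y → ψ ε y = 1) ∧
      (∀ y : ℝ, y < 1 / Real.sqrt ε → ψ ε y = 0)) ∧
    ∀ ε : ℝ, 0 < ε → ∀ (p y : ℝ) (ω : Ω), H ε p y ω =
      ψ ε (-y) * HL p y ω + (1 - ψ ε (-y)) * (1 - ψ ε y) * H0 p y ω + ψ ε y * HR p y ω

/-! ### Effective Hamiltonians -/

/-- The effective Hamiltonian `H̄_α(p)` at a fixed `ω`: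
`inf` of the `μ` for which `H_α(p + Dv, y, ω) ≤ μ` has a Lipschitz, strictly sublinear
viscosity subsolution. -/
def effectiveHam (Hα : ℝ → ℝ → Ω → ℝ) (ω : Ω) (p : ℝ) : ℝ :=
  sInf {μ : ℝ | ∃ v : ℝ → ℝ, IsLip v ∧
    Tendsto (fun y => v y / |y|) (cocompact ℝ) (𝓝 0) ∧
    IsViscSubsol (fun q y => Hα q y ω) μ Set.univ fun y => p * y + v y}

/-- Non-decreasing part of a (convex coercive) Hamiltonian. -/
def Hplus (G : ℝ → ℝ) (p : ℝ) : ℝ := if 0 ≤ p then G p else sInf (Set.range G)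

/-- Non-increasing part of a (convex coercive) Hamiltonian. -/
def Hminus (G : ℝ → ℝ) (p : ℝ) : ℝ := if p ≤ 0 then G p else sInf (Set.range G)

/-! ### The approximated corrector equation -/

/-- Viscosity solution of `δ v + G(Dv, y) = 0` on `ℝ`. -/
def IsViscSolDelta (G : ℝ → ℝ → ℝ) (δ : ℝ) (v : ℝ → ℝ) : Prop :=
  (∀ φ : ℝ → ℝ, ContDiff ℝ 1 φ → ∀ y₀ : ℝ, IsLocalMax (fun y => v y - φ y) y₀ →
    δ * v y₀ + G (deriv φ y₀) y₀ ≤ 0) ∧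
  (∀ φ : ℝ → ℝ, ContDiff ℝ 1 φ → ∀ y₀ : ℝ, IsLocalMin (fun y => v y - φ y) y₀ →
    0 ≤ δ * v y₀ + G (deriv φ y₀) y₀)

/-! ### Evolutive Hamilton–Jacobi equations -/

/-- Viscosity subsolution of `u_t + G(Du, y) = 0` on `(0,T) × ℝ`. -/
def IsViscSubsolEvol (G : ℝ → ℝ → ℝ) (T : ℝ) (u : ℝ → ℝ → ℝ) : Prop :=
  ∀ φ : ℝ × ℝ → ℝ, ContDiff ℝ 1 φ → ∀ t₀ x₀ : ℝ, 0 < t₀ → t₀ < T →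
    IsLocalMaxOn (fun q : ℝ × ℝ => u q.1 q.2 - φ q) (Set.Ioo 0 T ×ˢ Set.univ) (t₀, x₀) →
    deriv (fun t => φ (t, x₀)) t₀ + G (deriv (fun x => φ (t₀, x)) x₀) x₀ ≤ 0

/-- Viscosity supersolution of `u_t + G(Du, y) = 0` on `(0,T) × ℝ`. -/
def IsViscSupersolEvol (G : ℝ → ℝ → ℝ) (T : ℝ) (u : ℝ → ℝ → ℝ) : Prop :=
  ∀ φ : ℝ × ℝ → ℝ, ContDiff ℝ 1 φ → ∀ t₀ x₀ : ℝ, 0 < t₀ → t₀ < T →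
    IsLocalMinOn (fun q : ℝ × ℝ => u q.1 q.2 - φ q) (Set.Ioo 0 T ×ˢ Set.univ) (t₀, x₀) →
    0 ≤ deriv (fun t => φ (t, x₀)) t₀ + G (deriv (fun x => φ (t₀, x)) x₀) x₀

/-! ### The junction problem -/

/-- Test functions for the junction problem: continuous, `C¹` on each side of the junction. -/
def IsPiecewiseC1 (φ : ℝ × ℝ → ℝ) : Prop :=
  Continuous φ ∧ ContDiffOn ℝ 1 φ {q : ℝ × ℝ | q.2 ≤ 0} ∧
    ContDiffOn ℝ 1 φ {q : ℝ × ℝ | 0 ≤ q.2}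

/-- Viscosity subsolution of the junction problem with flux limiter `A`. -/
def IsJunctionSubsol (HLb HRb : ℝ → ℝ) (A T : ℝ) (u : ℝ → ℝ → ℝ) : Prop :=
  ∀ φ : ℝ × ℝ → ℝ, IsPiecewiseC1 φ → ∀ t₀ x₀ : ℝ, 0 < t₀ → t₀ < T →
    IsLocalMaxOn (fun q : ℝ × ℝ => u q.1 q.2 - φ q) (Set.Ioo 0 T ×ˢ Set.univ) (t₀, x₀) →
    (x₀ < 0 → deriv (fun t => φ (t, x₀)) t₀ + HLb (deriv (fun x => φ (t₀, x)) x₀) ≤ 0) ∧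
    (0 < x₀ → deriv (fun t => φ (t, x₀)) t₀ + HRb (deriv (fun x => φ (t₀, x)) x₀) ≤ 0) ∧
    (x₀ = 0 → deriv (fun t => φ (t, 0)) t₀ +
      max A (max (Hplus HLb (derivWithin (fun x => φ (t₀, x)) (Set.Iic 0) 0))
        (Hminus HRb (derivWithin (fun x => φ (t₀, x)) (Set.Ici 0) 0))) ≤ 0)

/-- Viscosity supersolution of the junction problem with flux limiter `A`. -/
def IsJunctionSupersol (HLb HRb : ℝ → ℝ) (A T : ℝ) (u : ℝ → ℝ → ℝ) : Prop :=
  ∀ φ : ℝ × ℝ → ℝ, IsPiecewiseC1 φ → ∀ t₀ x₀ : ℝ, 0 < t₀ → t₀ < T →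
    IsLocalMinOn (fun q : ℝ × ℝ => u q.1 q.2 - φ q) (Set.Ioo 0 T ×ˢ Set.univ) (t₀, x₀) →
    (x₀ < 0 → 0 ≤ deriv (fun t => φ (t, x₀)) t₀ + HLb (deriv (fun x => φ (t₀, x)) x₀)) ∧
    (0 < x₀ → 0 ≤ deriv (fun t => φ (t, x₀)) t₀ + HRb (deriv (fun x => φ (t₀, x)) x₀)) ∧
    (x₀ = 0 → 0 ≤ deriv (fun t => φ (t, 0)) t₀ +
      max A (max (Hplus HLb (derivWithin (fun x => φ (t₀, x)) (Set.Iic 0) 0))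
        (Hminus HRb (derivWithin (fun x => φ (t₀, x)) (Set.Ici 0) 0))))

/-- Solution of the limit junction problem with initial datum `u₀`. -/
def IsJunctionSol (HLb HRb : ℝ → ℝ) (A T : ℝ) (u₀ : ℝ → ℝ) (u : ℝ → ℝ → ℝ) : Prop :=
  ContinuousOn (fun q : ℝ × ℝ => u q.1 q.2) (Set.Ico 0 T ×ˢ Set.univ) ∧
  (∀ y, u 0 y = u₀ y) ∧
  IsJunctionSubsol HLb HRb A T u ∧ IsJunctionSupersol HLb HRb A T u

/-! The flux-limiter condition forces `H(0, y, ω) ≤ μ` for every `y`: penalizing a Lipschitz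
subsolution below level `s` by `N (y - y₀)²` produces maxima arbitrarily close to `y₀`, where
(H6) gives `H(0, ·, ω) ≤ s`. By convexity, `{p ≥ 0 | H(p, y, ω) ≤ μ}` is an interval
`[0, σ(y)]` (`σ = maxAdmissibleSlope`); coercivity bounds `σ`, and joint continuity of `H` makes
`σ` upper semicontinuous. The primitive `m(y) = ∫₀ʸ σ` solves the equation on all of `ℝ`: if `φ`
touches `m` from above at `y₀`, upper semicontinuity of `σ` puts `φ'(y₀)` in `[0, σ(y₀)]`; if it
touches from below and `H(q, y₀, ω) < μ` for some `q > φ'(y₀)`, then `σ ≥ q` near `y₀`, which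
forces `φ'(y₀) ≥ q`. -/

open intervalIntegral Function

section Slope

variable {u φ : ℝ → ℝ} {x b : ℝ}

lemma deriv_le_of_isLocalMax_sub (hφ : DifferentiableAt ℝ φ x)
    (hmax : IsLocalMax (fun y => u y - φ y) x)
    (hu : ∀ᶠ y in 𝓝[<] x, u x - u y ≤ b * (x - y)) : deriv φ x ≤ b := by
  refine le_of_tendsto (hasDerivAt_iff_tendsto_slope_left_right.1 hφ.hasDerivAt).1 ?_
  filter_upwards [hu, nhdsWithin_le_nhds hmax, self_mem_nhdsWithin] with y hy hmaxy (hyx : y < x)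
  rw [slope_def_field, div_le_iff_of_neg (sub_neg.2 hyx)]
  linarith

lemma le_deriv_of_isLocalMin_sub (hφ : DifferentiableAt ℝ φ x)
    (hmin : IsLocalMin (fun y => u y - φ y) x)
    (hu : ∀ᶠ y in 𝓝[<] x, b * (x - y) ≤ u x - u y) : b ≤ deriv φ x := by
  refine ge_of_tendsto (hasDerivAt_iff_tendsto_slope_left_right.1 hφ.hasDerivAt).1 ?_
  filter_upwards [hu, nhdsWithin_le_nhds hmin, self_mem_nhdsWithin] with y hy hminy (hyx : y < x)
  rw [slope_def_field, le_div_iff_of_neg (sub_neg.2 hyx)]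
  linarith

lemma deriv_nonneg_of_isLocalMax_sub (hφ : DifferentiableAt ℝ φ x) (hu : Monotone u)
    (hmax : IsLocalMax (fun y => u y - φ y) x) : 0 ≤ deriv φ x := by
  refine ge_of_tendsto (hasDerivAt_iff_tendsto_slope_left_right.1 hφ.hasDerivAt).2 ?_
  filter_upwards [nhdsWithin_le_nhds hmax, self_mem_nhdsWithin] with y hmaxy (hxy : x < y)
  have := hu hxy.le
  rw [slope_def_field]
  exact div_nonneg (by linarith) (by linarith)

end Slope

section Primitive

variable {f : ℝ → ℝ} {x b : ℝ}

lemma eventually_forall_Icc_of_eventually_nhds {P : ℝ → Prop} (h : ∀ᶠ s in 𝓝 x, P s) :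
    ∀ᶠ y in 𝓝[<] x, ∀ s ∈ Icc y x, P s := by
  obtain ⟨l, r, ⟨hl, hr⟩, hsub⟩ := mem_nhds_iff_exists_Ioo_subset.1 h
  filter_upwards [Ioo_mem_nhdsLT hl] with y hy s hs
  exact hsub ⟨hy.1.trans_le hs.1, hs.2.trans_lt hr⟩

lemma eventually_integral_sub_le (hf : ∀ a c, IntervalIntegrable f volume a c)
    (h : ∀ᶠ s in 𝓝 x, f s ≤ b) :
    ∀ᶠ y in 𝓝[<] x, (∫ s in 0..x, f s) - ∫ s in 0..y, f s ≤ b * (x - y) := by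
  filter_upwards [eventually_forall_Icc_of_eventually_nhds h, self_mem_nhdsWithin]
    with y hy (hyx : y < x)
  rw [integral_interval_sub_left (hf 0 x) (hf 0 y)]
  calc ∫ s in y..x, f s ≤ ∫ _ in y..x, b :=
        integral_mono_on hyx.le (hf y x) intervalIntegrable_const hy
    _ = b * (x - y) := by simp [mul_comm]

lemma eventually_le_integral_sub (hf : ∀ a c, IntervalIntegrable f volume a c)
    (h : ∀ᶠ s in 𝓝 x, b ≤ f s) :
    ∀ᶠ y in 𝓝[<] x, b * (x - y) ≤ (∫ s in 0..x, f s) - ∫ s in 0..y, f s := by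
  filter_upwards [eventually_forall_Icc_of_eventually_nhds h, self_mem_nhdsWithin]
    with y hy (hyx : y < x)
  rw [integral_interval_sub_left (hf 0 x) (hf 0 y)]
  calc b * (x - y) = ∫ _ in y..x, b := by simp [mul_comm]
    _ ≤ ∫ s in y..x, f s := integral_mono_on hyx.le intervalIntegrable_const (hf y x) hy

lemma monotone_integral_of_nonneg (hf : ∀ a c, IntervalIntegrable f volume a c)
    (h : ∀ s, 0 ≤ f s) : Monotone fun y => ∫ s in 0..y, f s := by
  intro x y hxy
  have := integral_interval_sub_left (hf 0 y) (hf 0 x)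
  linarith [integral_nonneg (μ := volume) hxy fun s _ => h s]

lemma lipschitzWith_integral {C : NNReal} (hf : ∀ a c, IntervalIntegrable f volume a c)
    (hC : ∀ s, |f s| ≤ C) : LipschitzWith C fun y => ∫ s in 0..y, f s :=
  LipschitzWith.of_dist_le_mul fun x y => by
    rw [Real.dist_eq, Real.dist_eq, integral_interval_sub_left (hf 0 x) (hf 0 y)]
    exact norm_integral_le_of_norm_le_const (f := f) fun s _ => hC s

end Primitive

section Viscosity

variable {G : ℝ → ℝ → ℝ} {μ : ℝ} {u : ℝ → ℝ}

lemma IsViscSol.restrict {U : Set ℝ} (h : IsViscSol G μ univ u) (hU : IsOpen U) :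
    IsViscSol G μ U u :=
  ⟨fun φ hφ y hy hmax => h.1 φ hφ y (mem_univ y) ((hmax.isLocalMax (hU.mem_nhds hy)).on univ),
    fun φ hφ y hy hmin => h.2 φ hφ y (mem_univ y) ((hmin.isLocalMin (hU.mem_nhds hy)).on univ)⟩

lemma isViscSubsol_const_mul {p : ℝ} (hp : ∀ y, G p y ≤ μ) :
    IsViscSubsol G μ univ fun y => p * y := by
  intro φ hφ y _ hmax
  have hd : HasDerivAt (fun y => p * y - φ y) (p * 1 - deriv φ y) y :=
    ((hasDerivAt_id y).const_mul p).sub (hφ.differentiable one_ne_zero y).hasDerivAt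
  have := (isLocalMaxOn_univ_iff.1 hmax).hasDerivAt_eq_zero hd
  rw [show deriv φ y = p by linarith]
  exact hp y

lemma LipschitzWith.exists_isMaxOn_sub_sq {v : ℝ → ℝ} {K : NNReal} (hv : LipschitzWith K v)
    (y₀ : ℝ) {δ : ℝ} (hδ : 0 < δ) :
    ∃ N y₁, |y₁ - y₀| ≤ δ ∧ IsMaxOn (fun y => v y - N * (y - y₀) ^ 2) univ y₁ := by
  set N : ℝ := K / δ + 1
  have hN : 0 < N := by positivity
  have hKN : (K : ℝ) ≤ N * δ := by
    have : (K : ℝ) / δ * δ = K := div_mul_cancel₀ _ hδ.ne'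
    nlinarith
  have hfar : ∀ y, δ < |y - y₀| → v y - N * (y - y₀) ^ 2 < v y₀ := by
    intro y hy
    have hv' : v y - v y₀ ≤ K * |y - y₀| := by
      simpa [Real.dist_eq] using (le_abs_self _).trans (hv.dist_le_mul y y₀)
    have : (K : ℝ) * |y - y₀| < N * |y - y₀| ^ 2 := by
      nlinarith [abs_nonneg (y - y₀), mul_lt_mul_of_pos_left hy hN]
    rw [sq_abs] at this
    linarith
  have hcont : Continuous fun y => v y - N * (y - y₀) ^ 2 := by
    have := hv.continuous
    fun_prop
  obtain ⟨y₁, hy₁⟩ := hcont.exists_forall_ge' y₀ <| by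
    filter_upwards [(isCompact_closedBall y₀ δ).compl_mem_cocompact] with y hy
    simpa using (hfar y (by simpa [Real.dist_eq] using hy)).le
  refine ⟨N, y₁, not_lt.1 fun h => (hfar y₁ h).not_ge ?_, fun y _ => hy₁ y⟩
  simpa using hy₁ y₀

lemma apply_zero_le_of_isViscSubsol {s : ℝ} {v : ℝ → ℝ} (hG0 : Continuous (G 0))
    (hmin : ∀ p y, G 0 y ≤ G p y) (hv : IsLip v) (hsub : IsViscSubsol G s univ v) (y₀ : ℝ) :
    G 0 y₀ ≤ s := by
  obtain ⟨K, hK⟩ := hv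
  refine (isClosed_le hG0 continuous_const).closure_subset
    (Metric.mem_closure_iff.2 fun δ hδ => ?_)
  obtain ⟨N, y₁, hy₁, hmax⟩ := hK.exists_isMaxOn_sub_sq y₀ (half_pos hδ)
  refine ⟨y₁, (hmin _ _).trans (hsub _ (by fun_prop) y₁ (mem_univ _) hmax.localize), ?_⟩
  rw [Real.dist_eq, abs_sub_comm]
  linarith

end Viscosity

section MaxAdmissibleSlope

variable {G : ℝ → ℝ → ℝ} {μ R : ℝ}

variable (G μ) in
def maxAdmissibleSlope (y : ℝ) : ℝ := sSup {p | 0 ≤ p ∧ G p y ≤ μ}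

lemma le_maxAdmissibleSlope (hR : ∀ p y, G p y ≤ μ → p ≤ R) {p y : ℝ} (hp₀ : 0 ≤ p)
    (hp : G p y ≤ μ) : p ≤ maxAdmissibleSlope G μ y :=
  le_csSup ⟨R, fun q hq => hR q y hq.2⟩ ⟨hp₀, hp⟩

lemma maxAdmissibleSlope_nonneg (h₀ : ∀ y, G 0 y ≤ μ) (hR : ∀ p y, G p y ≤ μ → p ≤ R)
    (y : ℝ) : 0 ≤ maxAdmissibleSlope G μ y :=
  le_maxAdmissibleSlope hR le_rfl (h₀ y)

lemma maxAdmissibleSlope_le (h₀ : ∀ y, G 0 y ≤ μ) (hR : ∀ p y, G p y ≤ μ → p ≤ R) (y : ℝ) :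
    maxAdmissibleSlope G μ y ≤ R :=
  csSup_le ⟨0, le_rfl, h₀ y⟩ fun p hp => hR p y hp.2

lemma apply_maxAdmissibleSlope_le (hG : ∀ y, Continuous (G · y)) (h₀ : ∀ y, G 0 y ≤ μ)
    (hR : ∀ p y, G p y ≤ μ → p ≤ R) (y : ℝ) : G (maxAdmissibleSlope G μ y) y ≤ μ :=
  ((isClosed_Ici.inter (isClosed_le (hG y) continuous_const)).csSup_mem ⟨0, le_rfl, h₀ y⟩
    ⟨R, fun q hq => hR q y hq.2⟩).2

lemma apply_le_of_le_maxAdmissibleSlope (hG : ∀ y, Continuous (G · y))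
    (hconv : ∀ y, ConvexOn ℝ univ (G · y)) (h₀ : ∀ y, G 0 y ≤ μ)
    (hR : ∀ p y, G p y ≤ μ → p ≤ R) {p y : ℝ} (hp₀ : 0 ≤ p)
    (hp : p ≤ maxAdmissibleSlope G μ y) : G p y ≤ μ :=
  (((hconv y).convex_le μ).ordConnected.out ⟨mem_univ _, h₀ y⟩
    ⟨mem_univ _, apply_maxAdmissibleSlope_le hG h₀ hR y⟩ ⟨hp₀, hp⟩).2

lemma upperSemicontinuous_maxAdmissibleSlope (hG : Continuous (uncurry G))
    (h₀ : ∀ y, G 0 y ≤ μ) (hR : ∀ p y, G p y ≤ μ → p ≤ R) :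
    UpperSemicontinuous (maxAdmissibleSlope G μ) := by
  intro y₀ a ha
  have hnear : ∀ p ∈ Icc a R, ∀ᶠ q : ℝ × ℝ in 𝓝 (y₀, p), μ < G q.2 q.1 := by
    intro p hp
    have hp₀ : 0 ≤ p := (maxAdmissibleSlope_nonneg h₀ hR y₀).trans (ha.le.trans hp.1)
    have : μ < G p y₀ := lt_of_not_ge fun h =>
      (ha.trans_le hp.1).not_ge (le_maxAdmissibleSlope hR hp₀ h)
    exact (isOpen_lt continuous_const (hG.comp continuous_swap)).mem_nhds this
  filter_upwards [isCompact_Icc.eventually_forall_of_forall_eventually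
    (P := fun y p => μ < G p y) hnear] with y hy
  refine lt_of_not_ge fun h => ?_
  exact (hy _ ⟨h, maxAdmissibleSlope_le h₀ hR y⟩).not_ge
    (apply_maxAdmissibleSlope_le (hG.uncurry_right ·) h₀ hR y)

lemma eventually_le_maxAdmissibleSlope (hG : Continuous (uncurry G)) (h₀ : ∀ y, G 0 y ≤ μ)
    (hR : ∀ p y, G p y ≤ μ → p ≤ R) {q y₀ : ℝ} (hq : G q y₀ < μ) :
    ∀ᶠ y in 𝓝 y₀, q ≤ maxAdmissibleSlope G μ y := by
  filter_upwards [(isOpen_lt (hG.uncurry_left q) continuous_const).mem_nhds hq] with y hy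
  rcases le_or_gt 0 q with hq₀ | hq₀
  · exact le_maxAdmissibleSlope hR hq₀ hy.le
  · exact hq₀.le.trans (maxAdmissibleSlope_nonneg h₀ hR y)

lemma intervalIntegrable_maxAdmissibleSlope (hG : Continuous (uncurry G))
    (h₀ : ∀ y, G 0 y ≤ μ) (hR : ∀ p y, G p y ≤ μ → p ≤ R) (a b : ℝ) :
    IntervalIntegrable (maxAdmissibleSlope G μ) volume a b :=
  (intervalIntegrable_const (c := R)).mono_fun'
    (upperSemicontinuous_maxAdmissibleSlope hG h₀ hR).measurable.aestronglyMeasurable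
    (ae_of_all _ fun y => by
      show |maxAdmissibleSlope G μ y| ≤ R
      rw [abs_of_nonneg (maxAdmissibleSlope_nonneg h₀ hR y)]
      exact maxAdmissibleSlope_le h₀ hR y)

theorem isViscSol_integral_maxAdmissibleSlope (hG : Continuous (uncurry G))
    (hconv : ∀ y, ConvexOn ℝ univ (G · y)) (h₀ : ∀ y, G 0 y ≤ μ)
    (hR : ∀ p y, G p y ≤ μ → p ≤ R) :
    IsViscSol G μ univ fun y => ∫ s in 0..y, maxAdmissibleSlope G μ s := by
  have hint := intervalIntegrable_maxAdmissibleSlope hG h₀ hR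
  constructor
  · intro φ hφ y₀ _ hmax
    have hφ' := hφ.differentiable one_ne_zero y₀
    have hmax' := isLocalMaxOn_univ_iff.1 hmax
    refine apply_le_of_le_maxAdmissibleSlope (hG.uncurry_right ·) hconv h₀ hR
      (deriv_nonneg_of_isLocalMax_sub hφ'
        (monotone_integral_of_nonneg hint (maxAdmissibleSlope_nonneg h₀ hR)) hmax')
      (le_of_forall_gt_imp_ge_of_dense fun c hc => deriv_le_of_isLocalMax_sub hφ' hmax' ?_)
    exact eventually_integral_sub_le hint
      ((upperSemicontinuous_maxAdmissibleSlope hG h₀ hR y₀ c hc).mono fun _ => le_of_lt)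
  · intro φ hφ y₀ _ hmin
    by_contra! hlt
    obtain ⟨q, hq, hqμ⟩ : ∃ q > deriv φ y₀, G q y₀ < μ :=
      Eventually.exists_gt ((isOpen_lt (hG.uncurry_right y₀) continuous_const).mem_nhds hlt)
    exact hq.not_ge (le_deriv_of_isLocalMin_sub (hφ.differentiable one_ne_zero y₀)
      (isLocalMinOn_univ_iff.1 hmin)
      (eventually_le_integral_sub hint (eventually_le_maxAdmissibleSlope hG h₀ hR hqμ)))

end MaxAdmissibleSlope

namespace HamHyp

variable [MeasurableSpace Ω] {H : ℝ → ℝ → Ω → ℝ}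

lemma continuous_uncurry (hH : HamHyp H) (ω : Ω) :
    Continuous (uncurry fun p y => H p y ω) := by
  obtain ⟨K, hK⟩ := hH.lip_p
  obtain ⟨w, -, hw₀, hwc, hw⟩ := hH.modulus
  refine continuous_iff_continuousAt.2 fun ⟨p₀, y₀⟩ => ?_
  have hbound : ContinuousAt
      (fun q : ℝ × ℝ => K * |q.1 - p₀| + w (|y₀ - q.2| * (1 + |p₀|))) (p₀, y₀) :=
    (by fun_prop : ContinuousAt (fun q : ℝ × ℝ => K * |q.1 - p₀|) (p₀, y₀)).add
      (hwc.comp_of_eq (by fun_prop) (by simp))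
  rw [ContinuousAt, tendsto_iff_norm_sub_tendsto_zero]
  refine squeeze_zero (fun _ => norm_nonneg _) (fun q => ?_) (by simpa [hw₀] using hbound.tendsto)
  have hp : |H q.1 q.2 ω - H p₀ q.2 ω| ≤ K * |q.1 - p₀| := by
    simpa [Real.dist_eq] using (hK q.2 ω).dist_le_mul q.1 p₀
  calc ‖H q.1 q.2 ω - H p₀ y₀ ω‖
      ≤ |H q.1 q.2 ω - H p₀ q.2 ω| + |H p₀ q.2 ω - H p₀ y₀ ω| := abs_sub_le _ _ _
    _ ≤ K * |q.1 - p₀| + w (|y₀ - q.2| * (1 + |p₀|)) := add_le_add hp (hw p₀ y₀ q.2 ω)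

lemma apply_zero_le_of_fluxLimiter_le (hH : HamHyp H) {ω : Ω} {μ : ℝ}
    (hμ : fluxLimiter H ω ≤ μ) (y : ℝ) : H 0 y ω ≤ μ := by
  obtain ⟨_, _, γ, -, -, -, hbd⟩ := hH.bounds
  have hγ : ∀ y, H (-γ) y ω ≤ 0 := fun y => by simpa using (hbd (-γ) y ω).2
  refine le_trans ?_ hμ
  refine le_csInf ⟨0, fun y => -γ * y, ⟨_, lipschitzWith_smul (-γ)⟩, isViscSubsol_const_mul hγ⟩ ?_
  rintro s ⟨v, hv, hsub⟩
  exact apply_zero_le_of_isViscSubsol ((hH.continuous_uncurry ω).uncurry_left 0)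
    (hH.min_at_zero · · ω) hv hsub y

lemma exists_bound_of_apply_le (hH : HamHyp H) (ω : Ω) (μ : ℝ) :
    ∃ R, ∀ p y, H p y ω ≤ μ → p ≤ R := by
  obtain ⟨R, hR⟩ := hH.coercive (μ + 1)
  refine ⟨R, fun p y hp => le_of_not_gt fun h => ?_⟩
  linarith [hR p y ω (h.le.trans (le_abs_self p))]

end HamHyp

/-- existence of a globally Lipschitz viscosity solution of the metric
problem `H(Dm, y, ω) = μ` in `ℝ \ {0}`, `m(0) = 0`, for every `μ ≥ Ã(ω)`. -/
theorem metric_problem_existence [MeasurableSpace Ω] (H : ℝ → ℝ → Ω → ℝ)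
    (hH : HamHyp H) (ω : Ω) (μ : ℝ) (hμ : fluxLimiter H ω ≤ μ) :
    ∃ m : ℝ → ℝ, IsLip m ∧ m 0 = 0 ∧
      IsViscSol (fun p y => H p y ω) μ ({(0 : ℝ)}ᶜ) m := by
  set G : ℝ → ℝ → ℝ := fun p y => H p y ω
  have hG : Continuous (uncurry G) := hH.continuous_uncurry ω
  have h₀ : ∀ y, G 0 y ≤ μ := hH.apply_zero_le_of_fluxLimiter_le hμ
  obtain ⟨R, hR⟩ := hH.exists_bound_of_apply_le ω μ
  have hσR : ∀ s, |maxAdmissibleSlope G μ s| ≤ R.toNNReal := fun s => by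
    rw [abs_of_nonneg (maxAdmissibleSlope_nonneg h₀ hR s)]
    exact (maxAdmissibleSlope_le h₀ hR s).trans (le_max_left _ _)
  refine ⟨fun y => ∫ s in 0..y, maxAdmissibleSlope G μ s,
    ⟨_, lipschitzWith_integral (intervalIntegrable_maxAdmissibleSlope hG h₀ hR) hσR⟩,
    integral_same, ?_⟩
  exact (isViscSol_integral_maxAdmissibleSlope hG (hH.convex_p · ω) h₀ hR).restrict
    isOpen_compl_singleton
end
end

section
/- Assume H_L and H_R satisfy (H1)–(H6), the stationarity (H8) and the unit range of dependence (H9). Then there exists an event Ω₁ of full probability such that for all ω ∈ Ω₁: sup_{y∈[1,+∞)} H_R(0,y,ω) = sup_{y∈ℝ} H_R(0,y,ω) and sup_{y∈(−∞,−1]} H_L(0,y,ω) = sup_{y∈ℝ} H_L(0,y,ω). -/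
open MeasureTheory ProbabilityTheory Set Filter Topology

noncomputable section

variable {Ω : Type*}

/-!
The tail suprema `F a ω = sup_{y ≥ a} H_R(0, y, ω)` are bounded, measurable and non-increasing
in `a`, and stationarity gives `F a = F 0 ∘ τ a`, so every `F a` has the same expectation.
For `a ≤ b` the non-negative variable `F a - F b` then has zero expectation, hence vanishes
almost surely; taking `a, b` integers makes `a ↦ F a ω` almost surely constant, and its constant
value is both `sup_{y ≥ 1}` and `sup_ℝ`. The case of `H_L` is the mirror image.
-/

section ConditionallyCompleteLattice

variable {α β ι : Type*} [ConditionallyCompleteLattice β] {f : α → β}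

lemma csSup_image_iUnion [Nonempty ι] (hf : BddAbove (range f)) {s : ι → Set α}
    (hs : ∀ i, (s i).Nonempty) : sSup (f '' ⋃ i, s i) = ⨆ i, sSup (f '' s i) := by
  have hbdd : ∀ t : Set α, BddAbove (f '' t) := fun t => hf.mono (image_subset_range f t)
  apply le_antisymm
  · refine csSup_le ((hs (Classical.arbitrary ι)).image f |>.mono
      (image_mono (subset_iUnion s _))) ?_
    rintro _ ⟨x, hx, rfl⟩
    obtain ⟨i, hi⟩ := mem_iUnion.1 hx
    refine le_ciSup_of_le ⟨sSup (range f), ?_⟩ i (le_csSup (hbdd _) (mem_image_of_mem f hi))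
    rintro _ ⟨j, rfl⟩
    exact csSup_le_csSup hf ((hs j).image f) (image_subset_range f _)
  · exact ciSup_le fun i =>
      csSup_le_csSup (hbdd _) ((hs i).image f) (image_mono (subset_iUnion s i))

lemma ciSup_eq_of_forall_csSup_image_eq [Nonempty α] (hf : BddAbove (range f)) {s : ι → Set α}
    (hs : ∀ x, ∃ i, x ∈ s i) {c : β} (h : ∀ i, sSup (f '' s i) = c) : ⨆ x, f x = c := by
  apply le_antisymm
  · refine ciSup_le fun x => ?_
    obtain ⟨i, hi⟩ := hs x
    exact h i ▸ le_csSup (hf.mono (image_subset_range f _)) (mem_image_of_mem f hi)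
  · obtain ⟨i, hi⟩ := hs (Classical.arbitrary α)
    exact h i ▸ csSup_le_csSup hf ⟨_, mem_image_of_mem f hi⟩ (image_subset_range f _)

end ConditionallyCompleteLattice

lemma bddAbove_range_of_abs_le {α : Type*} {f : α → ℝ} {C : ℝ} (hf : ∀ x, |f x| ≤ C) :
    BddAbove (range f) :=
  ⟨C, forall_mem_range.2 fun x => (abs_le.1 (hf x)).2⟩

lemma abs_csSup_image_le {α : Type*} {f : α → ℝ} {C : ℝ} (hf : ∀ x, |f x| ≤ C) {s : Set α}
    (hs : s.Nonempty) : |sSup (f '' s)| ≤ C := by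
  obtain ⟨x, hx⟩ := hs
  refine abs_le.2 ⟨(abs_le.1 (hf x)).1.trans ?_, csSup_le ⟨f x, mem_image_of_mem f hx⟩ ?_⟩
  · exact le_csSup ((bddAbove_range_of_abs_le hf).mono (image_subset_range f s))
      (mem_image_of_mem f hx)
  · exact forall_mem_image.2 fun y _ => (abs_le.1 (hf y)).2

theorem ae_forall_eq_of_antitone_of_measurePreserving {Ω : Type*} [MeasurableSpace Ω]
    {μ : Measure Ω} {σ : ℝ → Ω → Ω} (hσ : ∀ a, MeasurePreserving (σ a) μ μ) {F : ℝ → Ω → ℝ}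
    (hF : ∀ a, F a = F 0 ∘ σ a) (hint : Integrable (F 0) μ)
    (hanti : ∀ ω, Antitone fun a => F a ω) : ∀ᵐ ω ∂μ, ∀ a, F a ω = F 0 ω := by
  have hint' : ∀ a, Integrable (F a) μ := fun a =>
    hF a ▸ (hσ a).integrable_comp_of_integrable hint
  have hmean : ∀ a, ∫ ω, F a ω ∂μ = ∫ ω, F 0 ω ∂μ := fun a => by
    rw [hF a, Function.comp_def, ← integral_map (hσ a).measurable.aemeasurable
      (by rw [(hσ a).map_eq]; exact hint.aestronglyMeasurable), (hσ a).map_eq]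
  have hsym : ∀ n : ℕ, F n =ᵐ[μ] F (-n) := fun n =>
    (integral_eq_iff_of_ae_le (hint' _) (hint' _)
      (ae_of_all _ fun ω => hanti ω (by linarith [n.cast_nonneg (α := ℝ)]))).1
      ((hmean _).trans (hmean _).symm)
  filter_upwards [ae_all_iff.2 hsym] with ω hω a
  obtain ⟨n, hn⟩ := exists_nat_ge |a|
  have hsandwich : ∀ b : ℝ, |b| ≤ n → F b ω = F n ω := fun b hb =>
    le_antisymm ((hanti ω (neg_le_of_abs_le hb)).trans (hω n).ge) (hanti ω (le_of_abs_le hb))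
  rw [hsandwich a hn, hsandwich 0 (by simp)]

section StationaryProcess

variable {Ω : Type*} {τ : ℝ → Ω → Ω} {X : ℝ → Ω → ℝ} {C : ℝ}

lemma image_Ici_of_shift (hX : ∀ y z ω, X (y + z) ω = X y (τ z ω)) (a : ℝ) (ω : Ω) :
    (X · (τ a ω)) '' Ici 0 = (X · ω) '' Ici a := by
  rw [show Ici a = (· + a) '' Ici 0 by simp, image_image]
  simp_rw [hX]

lemma image_Iic_of_shift (hX : ∀ y z ω, X (y + z) ω = X y (τ z ω)) (a : ℝ) (ω : Ω) :
    (X · (τ a ω)) '' Iic 0 = (X · ω) '' Iic a := by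
  rw [show Iic a = (· + a) '' Iic 0 by simp, image_image]
  simp_rw [hX]

variable [MeasurableSpace Ω]

lemma measurable_csSup_image_Ici (hbdd : ∀ y ω, |X y ω| ≤ C)
    (hmeas : ∀ a b, Measurable fun ω => sSup ((X · ω) '' Ico a b)) (a : ℝ) :
    Measurable fun ω => sSup ((X · ω) '' Ici a) := by
  have hIci : Ici a = ⋃ n : ℕ, Ico a (a + (n + 1)) := by
    ext y
    simp only [mem_Ici, mem_iUnion, mem_Ico]
    refine ⟨fun hy => ?_, fun ⟨_, hy, _⟩ => hy⟩
    obtain ⟨n, hn⟩ := exists_nat_gt (y - a)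
    exact ⟨n, hy, by linarith⟩
  have hsup : ∀ ω, sSup ((X · ω) '' Ici a) = ⨆ n : ℕ, sSup ((X · ω) '' Ico a (a + (n + 1))) :=
    fun ω => by
      rw [hIci]
      exact csSup_image_iUnion (bddAbove_range_of_abs_le (hbdd · ω))
        fun n => nonempty_Ico.2 (lt_add_of_pos_right a n.cast_add_one_pos)
  simp_rw [hsup]
  exact Measurable.iSup fun n => hmeas _ _

lemma measurable_csSup_image_Iic (hbdd : ∀ y ω, |X y ω| ≤ C) (hX : ∀ y, Measurable (X y))
    (hmeas : ∀ a b, Measurable fun ω => sSup ((X · ω) '' Ico a b)) (a : ℝ) :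
    Measurable fun ω => sSup ((X · ω) '' Iic a) := by
  have hIio : Iio a = ⋃ n : ℕ, Ico (a - (n + 1)) a := by
    refine (iUnion_Ico_eq_Iio_self_iff.2 fun x hx => ?_).symm
    obtain ⟨n, hn⟩ := exists_nat_gt (a - x)
    exact ⟨n, by linarith⟩
  have hsup : ∀ ω, sSup ((X · ω) '' Iic a) =
      X a ω ⊔ ⨆ n : ℕ, sSup ((X · ω) '' Ico (a - (n + 1)) a) := fun ω => by
    have hbdd' := bddAbove_range_of_abs_le (hbdd · ω)
    rw [← Iio_insert, image_insert_eq,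
      csSup_insert (hbdd'.mono (image_subset_range _ _)) (nonempty_Iio.image _), hIio,
      csSup_image_iUnion hbdd' fun n => nonempty_Ico.2 (sub_lt_self a n.cast_add_one_pos)]
  simp_rw [hsup]
  exact (hX a).sup (Measurable.iSup fun n => hmeas _ _)

lemma integrable_csSup_image {μ : Measure Ω} [IsFiniteMeasure μ] (hbdd : ∀ y ω, |X y ω| ≤ C)
    {s : Set ℝ} (hs : s.Nonempty) (hmeas : Measurable fun ω => sSup ((X · ω) '' s)) :
    Integrable (fun ω => sSup ((X · ω) '' s)) μ :=
  .of_bound hmeas.aestronglyMeasurable C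
    (ae_of_all _ fun ω => (abs_csSup_image_le (hbdd · ω) hs).trans_eq' (Real.norm_eq_abs _))

variable {μ : Measure Ω} [IsFiniteMeasure μ]

theorem ae_forall_csSup_image_Ici_eq (hτ : ∀ z, MeasurePreserving (τ z) μ μ)
    (hshift : ∀ y z ω, X (y + z) ω = X y (τ z ω)) (hbdd : ∀ y ω, |X y ω| ≤ C)
    (hmeas : ∀ a b, Measurable fun ω => sSup ((X · ω) '' Ico a b)) :
    ∀ᵐ ω ∂μ, ∀ a, sSup ((X · ω) '' Ici a) = sSup ((X · ω) '' Ici 0) :=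
  ae_forall_eq_of_antitone_of_measurePreserving (F := fun a ω => sSup ((X · ω) '' Ici a)) hτ
    (fun a => funext fun ω => by simp only [Function.comp, image_Ici_of_shift hshift])
    (integrable_csSup_image hbdd nonempty_Ici (measurable_csSup_image_Ici hbdd hmeas 0))
    fun ω _ _ hab => csSup_le_csSup ((bddAbove_range_of_abs_le (hbdd · ω)).mono
      (image_subset_range _ _)) (nonempty_Ici.image _) (image_mono (Ici_subset_Ici.2 hab))

theorem ae_forall_csSup_image_Iic_eq (hτ : ∀ z, MeasurePreserving (τ z) μ μ)
    (hshift : ∀ y z ω, X (y + z) ω = X y (τ z ω)) (hbdd : ∀ y ω, |X y ω| ≤ C)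
    (hX : ∀ y, Measurable (X y)) (hmeas : ∀ a b, Measurable fun ω => sSup ((X · ω) '' Ico a b)) :
    ∀ᵐ ω ∂μ, ∀ a, sSup ((X · ω) '' Iic a) = sSup ((X · ω) '' Iic 0) := by
  have := ae_forall_eq_of_antitone_of_measurePreserving
    (F := fun a ω => sSup ((X · ω) '' Iic (-a))) (fun a => hτ (-a))
    (fun a => funext fun ω => by simp only [Function.comp, neg_zero, image_Iic_of_shift hshift])
    (integrable_csSup_image hbdd nonempty_Iic (measurable_csSup_image_Iic hbdd hX hmeas _))
    fun ω _ _ hab => csSup_le_csSup ((bddAbove_range_of_abs_le (hbdd · ω)).mono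
      (image_subset_range _ _)) (nonempty_Iic.image _)
      (image_mono (Iic_subset_Iic.2 (neg_le_neg hab)))
  filter_upwards [this] with ω hω a
  simpa using hω (-a)

end StationaryProcess

namespace HamHyp

variable {Ω : Type*} [MeasurableSpace Ω] {H : ℝ → ℝ → Ω → ℝ}

lemma measurable_apply (hH : HamHyp H) (p y : ℝ) : Measurable (H p y) :=
  hH.meas.comp (measurable_const.prodMk (measurable_const.prodMk measurable_id))

lemma exists_abs_apply_zero_le (hH : HamHyp H) : ∃ C, ∀ y ω, |H 0 y ω| ≤ C := by
  obtain ⟨c₀, C₀, γ, hc₀, hC₀, -, hb⟩ := hH.bounds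
  refine ⟨(c₀ + C₀) * |γ|, fun y ω => ?_⟩
  obtain ⟨hlo, hhi⟩ := hb 0 y ω
  rw [zero_add] at hlo hhi
  exact abs_le.2 ⟨by nlinarith [abs_nonneg γ], by nlinarith [abs_nonneg γ]⟩

end HamHyp

theorem sup_attained_far_from_origin_general [MeasurableSpace Ω]
    (P : Measure Ω) [IsProbabilityMeasure P]
    (τ : ℝ → Ω → Ω) (hτ : ErgodicSetup P τ)
    (HL HR : ℝ → ℝ → Ω → ℝ)
    (hHL : HamHyp HL) (hHR : HamHyp HR)
    (hstatL : Stationary τ HL) (hstatR : Stationary τ HR)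
    (hmeasL : ∀ a b : ℝ, Measurable fun ω => sSup ((fun y => HL 0 y ω) '' Set.Ico a b))
    (hmeasR : ∀ a b : ℝ, Measurable fun ω => sSup ((fun y => HR 0 y ω) '' Set.Ico a b)) :
    ∃ Ω₁ : Set Ω, MeasurableSet Ω₁ ∧ P Ω₁ = 1 ∧ ∀ ω ∈ Ω₁,
      sSup ((fun y => HR 0 y ω) '' Set.Ici (1 : ℝ)) = (⨆ y : ℝ, HR 0 y ω) ∧
      sSup ((fun y => HL 0 y ω) '' Set.Iic (-1 : ℝ)) = (⨆ y : ℝ, HL 0 y ω) := by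
  obtain ⟨CR, hCR⟩ := hHR.exists_abs_apply_zero_le
  obtain ⟨CL, hCL⟩ := hHL.exists_abs_apply_zero_le
  have hR := ae_forall_csSup_image_Ici_eq (μ := P) hτ.preserving (hstatR 0) hCR hmeasR
  have hL := ae_forall_csSup_image_Iic_eq (μ := P) hτ.preserving (hstatL 0) hCL
    (hHL.measurable_apply 0) hmeasL
  obtain ⟨Ω₁, hΩ₁, hmeas, hgood⟩ := (hR.and hL).exists_measurable_mem
  refine ⟨Ω₁, hmeas, (mem_ae_iff_prob_eq_one hmeas).1 hΩ₁, fun ω hω => ?_⟩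
  obtain ⟨hωR, hωL⟩ := hgood ω hω
  exact ⟨(hωR 1).trans (ciSup_eq_of_forall_csSup_image_eq (bddAbove_range_of_abs_le (hCR · ω))
      (fun y => ⟨y, self_mem_Ici⟩) hωR).symm,
    (hωL (-1)).trans (ciSup_eq_of_forall_csSup_image_eq (bddAbove_range_of_abs_le (hCL · ω))
      (fun y => ⟨y, self_mem_Iic⟩) hωL).symm⟩

/-- almost surely, the supremum of `H_R(0,·,ω)` over `[1,∞)`
(resp. of `H_L(0,·,ω)` over `(-∞,-1]`) equals its supremum over `ℝ`. -/
theorem sup_attained_far_from_origin [MeasurableSpace Ω]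
    (P : Measure Ω) [IsProbabilityMeasure P]
    (τ : ℝ → Ω → Ω) (hτ : ErgodicSetup P τ)
    (HL HR : ℝ → ℝ → Ω → ℝ)
    (hHL : HamHyp HL) (hHR : HamHyp HR)
    (hstatL : Stationary τ HL) (hstatR : Stationary τ HR)
    (hdepL : UnitRangeDep P HL) (hdepR : UnitRangeDep P HR)
    (hmeasL : ∀ a b : ℝ, Measurable fun ω => sSup ((fun y => HL 0 y ω) '' Set.Ico a b))
    (hmeasR : ∀ a b : ℝ, Measurable fun ω => sSup ((fun y => HR 0 y ω) '' Set.Ico a b)) :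
    ∃ Ω₁ : Set Ω, MeasurableSet Ω₁ ∧ P Ω₁ = 1 ∧ ∀ ω ∈ Ω₁,
      sSup ((fun y => HR 0 y ω) '' Set.Ici (1 : ℝ)) = (⨆ y : ℝ, HR 0 y ω) ∧
      sSup ((fun y => HL 0 y ω) '' Set.Iic (-1 : ℝ)) = (⨆ y : ℝ, HL 0 y ω) :=
  sup_attained_far_from_origin_general P τ hτ HL HR hHL hHR hstatL hstatR hmeasL hmeasR
end
end

section
/- Convergence of the approximated corrector at the origin: under the assumptions (H1)–(H6), (H8), (H9) and (H7-ε), for all ω ∈ Ω₀^{ε₀}, the unique bounded solution v^δ of δ v^δ + H(Dv^δ,y,ω) = 0 on ℝ satisfies δ v^δ(0,ω) → −Ā as δ → 0. -/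
open MeasureTheory ProbabilityTheory Set Filter Topology

noncomputable section

variable {Ω : Type*}

/-! Everything happens at the fixed `ε` and `ω`, for the deterministic Hamiltonian
`G p y = H ε p y ω`, which is Lipschitz in `p`, minimal at `p = 0`, coercive, and continuous
in `y`; put `S = ⨆ y, G 0 y`.

A Lipschitz subsolution of `G ≤ μ` is touched from above by steep parabolas at points arbitrarily
close to any given `y`, and `G p ≥ G 0`, so `μ ≥ G 0 y` by continuity; constants are
subsolutions at level `S`. Hence the flux limiter `Ã(ω)` equals `S`, and it equals `Ā` on `Ω₀`.

For the corrector, compare `v^δ` with multiples of the penalization `√(1 + (y - c)²) - 1`,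
whose slopes lie in `[-1, 1]`. At a minimum of `v^δ + κ · penalty` the supersolution inequality
gives `δ v^δ(0) ≥ -S - Kκ` for every `κ > 0`. At a maximum `z` of `v^δ - B · penalty` centred at
a near-maximizer `c` of `G 0`, either `z` is close to `c` and `G ≥ G 0 c - η` by continuity, or
the slope there exceeds the coercivity radius; either way `δ v^δ(0) ≤ -G 0 c + η + δ C` with `C`
independent of `δ`. -/

open scoped NNReal

def penalty (c y : ℝ) : ℝ := √(1 + (y - c) ^ 2) - 1

lemma penalty_self (c : ℝ) : penalty c c = 0 := by
  simp [penalty]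

lemma penalty_nonneg (c y : ℝ) : 0 ≤ penalty c y := by
  have : 1 ≤ √(1 + (y - c) ^ 2) := Real.one_le_sqrt.2 (le_add_of_nonneg_right (sq_nonneg _))
  unfold penalty
  linarith

lemma abs_sub_sub_one_le_penalty (c y : ℝ) : |y - c| - 1 ≤ penalty c y := by
  have : |y - c| ≤ √(1 + (y - c) ^ 2) := by
    rw [← Real.sqrt_sq_eq_abs]
    exact Real.sqrt_le_sqrt (by linarith)
  unfold penalty
  linarith

lemma hasDerivAt_penalty (c y : ℝ) :
    HasDerivAt (penalty c) ((y - c) / √(1 + (y - c) ^ 2)) y := by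
  have hsq : HasDerivAt (fun t => 1 + (t - c) ^ 2) (2 * (y - c)) y := by
    simpa using (((hasDerivAt_id y).sub_const c).fun_pow 2).const_add 1
  have h := ((Real.hasDerivAt_sqrt (by positivity)).comp y hsq).sub_const 1
  rwa [show 1 / (2 * √(1 + (y - c) ^ 2)) * (2 * (y - c)) = (y - c) / √(1 + (y - c) ^ 2) by
    field_simp] at h

lemma contDiff_penalty (c : ℝ) : ContDiff ℝ 1 (penalty c) := by
  unfold penalty
  exact ((contDiff_const.add ((contDiff_id.sub contDiff_const).pow 2)).sqrt
    fun y => by positivity).sub contDiff_const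

lemma deriv_penalty (c y : ℝ) : deriv (penalty c) y = (y - c) / √(1 + (y - c) ^ 2) :=
  (hasDerivAt_penalty c y).deriv

lemma abs_deriv_penalty_le_one (c y : ℝ) : |deriv (penalty c) y| ≤ 1 := by
  have hpos : 0 < √(1 + (y - c) ^ 2) := Real.sqrt_pos.2 (by positivity)
  rw [deriv_penalty, abs_div, abs_of_pos hpos, div_le_one hpos, ← Real.sqrt_sq_eq_abs]
  exact Real.sqrt_le_sqrt (by linarith)

lemma div_sqrt_le_abs_deriv_penalty {c y d : ℝ} (hd : 0 ≤ d) (h : d ≤ |y - c|) :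
    d / √(1 + d ^ 2) ≤ |deriv (penalty c) y| := by
  have hd' : 0 < √(1 + d ^ 2) := Real.sqrt_pos.2 (by positivity)
  have hy' : 0 < √(1 + (y - c) ^ 2) := Real.sqrt_pos.2 (by positivity)
  have hsq : d ^ 2 ≤ (y - c) ^ 2 := by
    rw [← sq_abs (y - c)]
    exact pow_le_pow_left₀ hd h 2
  have hd_eq : d = √(d ^ 2) := (Real.sqrt_sq hd).symm
  rw [deriv_penalty, abs_div, abs_of_pos hy', div_le_div_iff₀ hd' hy', ← Real.sqrt_sq_eq_abs,
    hd_eq, ← Real.sqrt_mul (sq_nonneg _), ← Real.sqrt_mul (sq_nonneg _), ← hd_eq]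
  exact Real.sqrt_le_sqrt (by nlinarith)

lemma exists_forall_sub_penalty_le {v : ℝ → ℝ} (hv : Continuous v) {M : ℝ}
    (hM : ∀ y, v y ≤ M) {B : ℝ} (hB : 0 < B) (c : ℝ) :
    ∃ z, ∀ y, v y - B * penalty c y ≤ v z - B * penalty c z := by
  refine (hv.sub (continuous_const.mul (contDiff_penalty c).continuous)).exists_forall_ge ?_
  have hdist : Tendsto (fun y => |y - c|) (cocompact ℝ) atTop :=
    tendsto_norm_cocompact_atTop.comp (Homeomorph.subRight c).isClosedEmbedding.tendsto_cocompact
  refine tendsto_atBot_mono (fun y => ?_)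
    (tendsto_atBot_add_const_left _ (M + B) (tendsto_neg_atTop_atBot.comp
      (hdist.const_mul_atTop hB)))
  have := abs_sub_sub_one_le_penalty c y
  simp only [Function.comp, Pi.sub_apply, Pi.mul_apply]
  linarith [hM y, mul_le_mul_of_nonneg_left this hB.le]

section Viscosity

variable {G : ℝ → ℝ → ℝ}

lemma isViscSubsol_const {μ : ℝ} (hμ : ∀ y, G 0 y ≤ μ) (a : ℝ) :
    IsViscSubsol G μ univ fun _ => a := by
  intro φ _ y₀ _ hmax
  have hφ : IsLocalMin φ y₀ := by
    filter_upwards [isLocalMaxOn_univ_iff.1 hmax] with y hy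
    linarith
  rw [hφ.deriv_eq_zero]
  exact hμ y₀

lemma IsViscSubsol.exists_dist_lt_apply_zero_le {μ : ℝ} {u : ℝ → ℝ}
    (hsub : IsViscSubsol G μ univ u) (hu : IsLip u) (hmin : ∀ p y, G 0 y ≤ G p y)
    (y₀ : ℝ) {ρ : ℝ} (hρ : 0 < ρ) : ∃ z, dist z y₀ < ρ ∧ G 0 z ≤ μ := by
  obtain ⟨L, hL⟩ := hu
  set B := ((L : ℝ) + 1) / ρ
  have hBρ : B * ρ = L + 1 := div_mul_cancel₀ _ hρ.ne'
  have hcont : Continuous fun y => u y - B * (y - y₀) ^ 2 := by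
    have := hL.continuous
    fun_prop
  obtain ⟨z, -, hz⟩ := (isCompact_Icc (a := y₀ - ρ) (b := y₀ + ρ)).exists_isMaxOn
    (nonempty_Icc.2 (by linarith)) hcont.continuousOn
  -- `z` maximizes `u - B (· - y₀)²` on `[y₀ - ρ, y₀ + ρ]`, and the Lipschitz bound on `u`
  -- keeps it away from the endpoints
  have hclose : |z - y₀| < ρ := by
    have hy₀ : u y₀ ≤ u z - B * (z - y₀) ^ 2 := by
      simpa using hz (show y₀ ∈ Icc (y₀ - ρ) (y₀ + ρ) from ⟨by linarith, by linarith⟩)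
    have hLip : u z - u y₀ ≤ L * |z - y₀| :=
      (le_abs_self _).trans (by simpa [Real.dist_eq] using hL.dist_le_mul z y₀)
    by_contra! h
    have hB : 0 < B := by positivity
    have : (L + 1) * |z - y₀| ≤ B * (z - y₀) ^ 2 := by
      rw [← hBρ, ← sq_abs, mul_assoc, sq]
      gcongr
    nlinarith
  have hmax : IsLocalMaxOn (fun y => u y - B * (y - y₀) ^ 2) univ z :=
    isLocalMaxOn_univ_iff.2 (hz.isLocalMax (Icc_mem_nhds (by linarith [(abs_lt.1 hclose).1])
      (by linarith [(abs_lt.1 hclose).2])))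
  exact ⟨z, by rwa [Real.dist_eq],
    (hmin _ _).trans (hsub _ (by fun_prop) z (mem_univ z) hmax)⟩

lemma IsViscSubsol.apply_zero_le {μ : ℝ} {u : ℝ → ℝ} (hsub : IsViscSubsol G μ univ u)
    (hu : IsLip u) (hmin : ∀ p y, G 0 y ≤ G p y) (hcont : Continuous fun y => G 0 y)
    (y : ℝ) : G 0 y ≤ μ := by
  have hy : y ∈ closure {z | G 0 z ≤ μ} := Metric.mem_closure_iff.2 fun ρ hρ => by
    obtain ⟨z, hz, hGz⟩ := hsub.exists_dist_lt_apply_zero_le hu hmin y hρ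
    exact ⟨z, hGz, by rwa [dist_comm]⟩
  exact (isClosed_le hcont continuous_const).closure_subset hy

end Viscosity

theorem fluxLimiter_eq_iSup {H : ℝ → ℝ → Ω → ℝ} {ω : Ω} (hmin : ∀ p y, H 0 y ω ≤ H p y ω)
    (hcont : Continuous fun y => H 0 y ω) (hbdd : BddAbove (range fun y => H 0 y ω)) :
    fluxLimiter H ω = ⨆ y, H 0 y ω := by
  refine IsLeast.csInf_eq ⟨⟨fun _ => 0, ⟨0, LipschitzWith.const 0⟩,
    isViscSubsol_const (G := fun p y => H p y ω) (le_ciSup hbdd) 0⟩, ?_⟩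
  rintro μ ⟨u, hu, hsub⟩
  exact ciSup_le fun y => hsub.apply_zero_le hu hmin hcont y

section Corrector

variable {G : ℝ → ℝ → ℝ}

theorem IsViscSolDelta.neg_le_mul_apply_zero {K : ℝ≥0} (hK : ∀ y, LipschitzWith K fun p => G p y)
    {S : ℝ} (hS : ∀ y, G 0 y ≤ S) {δ : ℝ} {v : ℝ → ℝ} (hv : IsViscSolDelta G δ v) (hδ : 0 ≤ δ)
    (hvc : Continuous v) (hvb : ∃ M, ∀ y, |v y| ≤ M) : -S ≤ δ * v 0 := by
  obtain ⟨M, hM⟩ := hvb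
  refine le_of_forall_pos_le_add fun η hη => ?_
  set κ := η / (K + 1)
  have hκ : 0 < κ := by positivity
  have hKκ : K * κ ≤ η := by
    rw [mul_div_assoc', div_le_iff₀ (by positivity)]
    linarith
  obtain ⟨z, hz⟩ :=
    exists_forall_sub_penalty_le hvc.neg (fun y => neg_le.1 (abs_le.1 (hM y)).1) hκ 0
  simp only [Pi.neg_apply] at hz
  have hloc : IsLocalMin (fun y => v y - -κ * penalty 0 y) z :=
    Eventually.of_forall fun y => by dsimp only; linarith [hz y]
  have hsup := hv.2 _ (contDiff_const.mul (contDiff_penalty 0)) z hloc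
  rw [deriv_const_mul _ (hasDerivAt_penalty 0 z).differentiableAt] at hsup
  have hGz : G (-κ * deriv (penalty 0) z) z ≤ S + K * κ := by
    have hslope : |-κ * deriv (penalty 0) z| ≤ κ := by
      rw [abs_mul, abs_neg, abs_of_pos hκ]
      exact mul_le_of_le_one_right hκ.le (abs_deriv_penalty_le_one 0 z)
    have hLip := (hK z).dist_le_mul (-κ * deriv (penalty 0) z) 0
    rw [Real.dist_eq, Real.dist_eq, sub_zero] at hLip
    linarith [le_abs_self (G (-κ * deriv (penalty 0) z) z - G 0 z), hS z,
      mul_le_mul_of_nonneg_left hslope K.coe_nonneg]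
  have hvz : v z ≤ v 0 := by
    have h0 := hz 0
    rw [penalty_self, mul_zero] at h0
    linarith [mul_nonneg hκ.le (penalty_nonneg 0 z)]
  linarith [mul_le_mul_of_nonneg_left hvz hδ]

theorem exists_forall_mul_apply_zero_le (hmin : ∀ p y, G 0 y ≤ G p y)
    (hcoer : ∀ M, ∃ R, ∀ p y, R ≤ |p| → M ≤ G p y) {c : ℝ}
    (hc : ContinuousAt (fun y => G 0 y) c) {η : ℝ} (hη : 0 < η) :
    ∃ C, ∀ δ v, IsViscSolDelta G δ v → 0 ≤ δ → Continuous v → (∃ M, ∀ y, |v y| ≤ M) →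
      δ * v 0 ≤ -G 0 c + η + δ * C := by
  obtain ⟨d, hd, hnear⟩ :=
    Metric.eventually_nhds_iff.1 (hc.eventually (lt_mem_nhds (sub_lt_self (G 0 c) hη)))
  obtain ⟨R, hR⟩ := hcoer (G 0 c)
  -- far from `c` the slope of `B * penalty c` exceeds the coercivity radius `R`
  set B := (|R| + 1) * √(1 + d ^ 2) / d
  have hB : 0 < B := by positivity
  refine ⟨B * penalty c 0, fun δ v hv hδ hvc ⟨M, hM⟩ => ?_⟩
  obtain ⟨z, hz⟩ := exists_forall_sub_penalty_le hvc (fun y => (abs_le.1 (hM y)).2) hB c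
  have hsub := hv.1 _ (contDiff_const.mul (contDiff_penalty c)) z (Eventually.of_forall hz)
  rw [deriv_const_mul _ (hasDerivAt_penalty c z).differentiableAt] at hsub
  have hGz : G 0 c - η ≤ G (B * deriv (penalty c) z) z := by
    rcases lt_or_ge |z - c| d with hzc | hzc
    · exact (hnear (by rwa [Real.dist_eq])).le.trans (hmin _ _)
    · refine (sub_le_self _ hη.le).trans (hR _ _ ?_)
      calc R ≤ |R| + 1 := by linarith [le_abs_self R]
        _ = B * (d / √(1 + d ^ 2)) := by simp only [B]; field_simp
        _ ≤ |B * deriv (penalty c) z| := by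
          rw [abs_mul, abs_of_pos hB]
          exact mul_le_mul_of_nonneg_left (div_sqrt_le_abs_deriv_penalty hd.le hzc) hB.le
  have hv0 : v 0 ≤ v z + B * penalty c 0 := by
    linarith [hz 0, mul_nonneg hB.le (penalty_nonneg c z)]
  linarith [mul_le_mul_of_nonneg_left hv0 hδ]

theorem tendsto_mul_apply_zero_of_isViscSolDelta {K : ℝ≥0}
    (hK : ∀ y, LipschitzWith K fun p => G p y) (hmin : ∀ p y, G 0 y ≤ G p y)
    (hcoer : ∀ M, ∃ R, ∀ p y, R ≤ |p| → M ≤ G p y) (hcont : Continuous fun y => G 0 y)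
    (hbdd : BddAbove (range fun y => G 0 y)) {ε : ℝ} {v : ℝ → ℝ → ℝ}
    (hv : ∀ δ, 0 < δ → δ ≤ ε →
      Continuous (v δ) ∧ (∃ M, ∀ y, |v δ y| ≤ M) ∧ IsViscSolDelta G δ (v δ)) :
    Tendsto (fun δ => δ * v δ 0) (𝓝[Ioc 0 ε] 0) (𝓝 (-⨆ y, G 0 y)) := by
  have hIoc : ∀ᶠ δ in 𝓝[Ioc 0 ε] 0, δ ∈ Ioc 0 ε := self_mem_nhdsWithin
  refine tendsto_order.2 ⟨fun a ha => ?_, fun b hb => ?_⟩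
  · filter_upwards [hIoc] with δ ⟨hδ, hδε⟩
    obtain ⟨hvc, hvb, hvδ⟩ := hv δ hδ hδε
    exact ha.trans_le (hvδ.neg_le_mul_apply_zero hK (le_ciSup hbdd) hδ.le hvc hvb)
  · set η := (b + ⨆ y, G 0 y) / 3 with hη_def
    have hη : 0 < η := by linarith
    obtain ⟨c, hc⟩ := exists_lt_of_lt_ciSup (sub_lt_self (⨆ y, G 0 y) hη)
    obtain ⟨C, hC⟩ := exists_forall_mul_apply_zero_le hmin hcoer (hcont.continuousAt (x := c)) hη
    have hsmall : ∀ᶠ δ in 𝓝[Ioc 0 ε] 0, δ * C < η :=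
      ((continuous_id.mul continuous_const).tendsto' 0 0 (zero_mul C)).mono_left
        nhdsWithin_le_nhds |>.eventually (gt_mem_nhds hη)
    filter_upwards [hIoc, hsmall] with δ ⟨hδ, hδε⟩ hδC
    obtain ⟨hvc, hvb, hvδ⟩ := hv δ hδ hδε
    linarith [hC δ (v δ) hvδ hδ.le hvc hvb]

end Corrector

namespace HamHyp

variable [MeasurableSpace Ω] {H : ℝ → ℝ → Ω → ℝ}

lemma apply_zero_nonpos (hH : HamHyp H) (y : ℝ) (ω : Ω) : H 0 y ω ≤ 0 := by
  obtain ⟨_, _, γ, _, _, _, hbd⟩ := hH.bounds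
  simpa using (hH.min_at_zero (-γ) y ω).trans (hbd (-γ) y ω).2

lemma bddAbove_range_apply_zero (hH : HamHyp H) (ω : Ω) :
    BddAbove (range fun y => H 0 y ω) :=
  ⟨0, by rintro _ ⟨y, rfl⟩; exact hH.apply_zero_nonpos y ω⟩

lemma continuous_apply (hH : HamHyp H) (p : ℝ) (ω : Ω) : Continuous fun y => H p y ω := by
  obtain ⟨w, -, hw0, hwc, hmod⟩ := hH.modulus
  refine continuous_iff_continuousAt.2 fun x => tendsto_iff_dist_tendsto_zero.2 ?_
  refine squeeze_zero (fun _ => dist_nonneg) (fun y => (hmod p x y ω)) ?_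
  have harg : Tendsto (fun y => |x - y| * (1 + |p|)) (𝓝 x) (𝓝 0) := by
    have : Continuous fun y => |x - y| * (1 + |p|) := by fun_prop
    simpa using this.tendsto x
  have := hwc.tendsto.comp harg
  rwa [hw0] at this

end HamHyp

theorem corrector_convergence_at_origin_general [MeasurableSpace Ω]
    (H : ℝ → ℝ → ℝ → Ω → ℝ) (hHfam : ∀ ε : ℝ, 0 < ε → HamHyp (H ε))
    (ε₀ : ℝ)
    (Abar : ℝ)
    (Ω₀ : ℝ → Set Ω)
    (hΩ₀mono : ∀ ε ε' : ℝ, 0 < ε → ε ≤ ε' → Ω₀ ε' ⊆ Ω₀ ε)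
    (hΩ₀flux : ∀ ε : ℝ, 0 < ε → ∀ ω ∈ Ω₀ ε, fluxLimiter (H ε) ω = Abar)
    (ε : ℝ) (hε : 0 < ε) (hεε₀ : ε ≤ ε₀)
    (ω : Ω) (hω : ω ∈ Ω₀ ε₀)
    (v : ℝ → ℝ → ℝ)
    (hv : ∀ δ : ℝ, 0 < δ → δ ≤ ε → Continuous (v δ) ∧ (∃ M : ℝ, ∀ y : ℝ, |v δ y| ≤ M) ∧
      IsViscSolDelta (fun p y => H ε p y ω) δ (v δ)) :
    Tendsto (fun δ : ℝ => δ * v δ 0) (𝓝[Set.Ioc (0 : ℝ) ε] (0 : ℝ)) (𝓝 (-Abar)) := by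
  have hH := hHfam ε hε
  obtain ⟨K, hK⟩ := hH.lip_p
  have hmin : ∀ p y, H ε 0 y ω ≤ H ε p y ω := fun p y => hH.min_at_zero p y ω
  have hcont := hH.continuous_apply 0 ω
  have hbdd := hH.bddAbove_range_apply_zero ω
  rw [← hΩ₀flux ε hε ω (hΩ₀mono ε ε₀ hε hεε₀ hω), fluxLimiter_eq_iSup hmin hcont hbdd]
  exact tendsto_mul_apply_zero_of_isViscSolDelta (fun y => hK y ω) hmin
    (fun M => (hH.coercive M).imp fun R hR p y => hR p y ω) hcont hbdd hv

/-- convergence of the approximated corrector at the origin: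
`δ v^δ(0, ω) → -Ā` as `δ → 0`, for `ω` in the good event `Ω₀^{ε₀}`. -/
theorem corrector_convergence_at_origin [MeasurableSpace Ω]
    (P : Measure Ω) [IsProbabilityMeasure P]
    (τ : ℝ → Ω → Ω) (hτ : ErgodicSetup P τ)
    (HL HR H0 : ℝ → ℝ → Ω → ℝ)
    (hHL : HamHyp HL) (hHR : HamHyp HR) (hH0 : HamHyp H0)
    (hstatL : Stationary τ HL) (hstatR : Stationary τ HR) (hstat0 : Stationary τ H0)
    (hdepL : UnitRangeDep P HL) (hdepR : UnitRangeDep P HR) (hdep0 : UnitRangeDep P H0)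
    (H : ℝ → ℝ → ℝ → Ω → ℝ) (hHfam : ∀ ε : ℝ, 0 < ε → HamHyp (H ε))
    (hdecomp : DecompEps HL HR H0 H)
    (ε₀ : ℝ) (hε₀ : 0 < ε₀)
    (Abar : ℝ) (hAbar : ∀ᵐ ω ∂P, (⨆ y : ℝ, H0 0 y ω) = Abar)
    (θ : ℝ → ℝ) (hθ : Tendsto θ (𝓝[>] (0 : ℝ)) (𝓝 0))
    (Ω₀ : ℝ → Set Ω)
    (hΩ₀meas : ∀ ε : ℝ, 0 < ε → MeasurableSet (Ω₀ ε))
    (hΩ₀mono : ∀ ε ε' : ℝ, 0 < ε → ε ≤ ε' → Ω₀ ε' ⊆ Ω₀ ε)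
    (hΩ₀P : ∀ ε : ℝ, 0 < ε → (P (Ω₀ ε)).toReal = 1 - θ ε)
    (hΩ₀flux : ∀ ε : ℝ, 0 < ε → ∀ ω ∈ Ω₀ ε, fluxLimiter (H ε) ω = Abar)
    (hΩ₀homog : ∀ ε : ℝ, 0 < ε → ∀ ω ∈ Ω₀ ε, ∀ μ : ℝ, Abar < μ → ∀ x y : ℝ,
      ∃ mbar : ℝ, Tendsto (fun t : ℝ => metricSol (H ε) μ ω (t * y) (t * x) / t)
        atTop (𝓝 mbar))
    (ε : ℝ) (hε : 0 < ε) (hεε₀ : ε ≤ ε₀)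
    (ω : Ω) (hω : ω ∈ Ω₀ ε₀)
    (v : ℝ → ℝ → ℝ)
    (hv : ∀ δ : ℝ, 0 < δ → δ ≤ ε → Continuous (v δ) ∧ (∃ M : ℝ, ∀ y : ℝ, |v δ y| ≤ M) ∧
      IsViscSolDelta (fun p y => H ε p y ω) δ (v δ)) :
    Tendsto (fun δ : ℝ => δ * v δ 0) (𝓝[Set.Ioc (0 : ℝ) ε] (0 : ℝ)) (𝓝 (-Abar)) :=
  corrector_convergence_at_origin_general H hHfam ε₀ Abar Ω₀ hΩ₀mono hΩ₀flux ε hε hεε₀ ω hω v hv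
end
end
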